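/- Fix a monotone partiality strategy σ, a depth t, and a nonnegative integer x. Then the probability that a random history Z of depth t generated by the Markov chain with quality q satisfies con(Z) ≥ x is a non-decreasing function of q ∈ [0,1]. -/

import Mathlib

/-- Round outcomes: success, no consumption, failure. -/
inductive Ev : Type
  | S : Ev
  | N : Ev
  | F : Ev
deriving DecidableEq

instance : Fintype Ev where
  elems := {Ev.S, Ev.N, Ev.F}
  complete := by intro x; cases x <;> simp

/-- A history is a finite sequence of round outcomes. -/
abbrev Hist := List Ev

/-- The digest of a history: the subsequence of non-`N` entries. -/
def dig (Z : Hist) : Hist := Z.filter (fun v => v ≠ Ev.N)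

/-- Consumption: the number of non-`N` entries. -/
def con (Z : Hist) : ℕ := (dig Z).length

/-- Number of successes. -/
def Scount (Z : Hist) : ℕ := (Z.filter (fun v => v = Ev.S)).length

/-- Number of failures. -/
def Fcount (Z : Hist) : ℕ := (Z.filter (fun v => v = Ev.F)).length

/-- `Superior Z1 Z2` : equal depth, equal consumption, and no digest index
where `Z1` has `F` while `Z2` has `S`. -/
def Superior (Z1 Z2 : Hist) : Prop :=
  Z1.length = Z2.length ∧ con Z1 = con Z2 ∧
    ∀ i : ℕ, ¬ ((dig Z1)[i]? = some Ev.F ∧ (dig Z2)[i]? = some Ev.S)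

/-- Helper for the ex-ante function: current prefix, remaining events. -/
def exAnteFrom (σ : Hist → ℝ) : Hist → Hist → ℝ
  | _, [] => 1
  | pre, v :: rest =>
      (if v = Ev.N then 1 - σ pre else σ pre) * exAnteFrom σ (pre ++ [v]) rest

/-- The ex-ante function `c` of a partiality strategy `σ`:
`c(empty)=1`, `c(ZV)=σ(Z)c(Z)` for `V∈{S,F}`, `c(ZN)=(1-σ(Z))c(Z)`. -/
def exAnte (σ : Hist → ℝ) (Z : Hist) : ℝ := exAnteFrom σ [] Z

/-- Probability of a full history under the Markov chain with quality `q`. -/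
def histProb (σ : Hist → ℝ) (q : ℝ) (Z : Hist) : ℝ :=
  exAnte σ Z * q ^ Scount Z * (1 - q) ^ Fcount Z

/-- A strategy takes values in `[0,1]`. -/
def ValidStrat (σ : Hist → ℝ) : Prop := ∀ Z, σ Z ∈ Set.Icc (0 : ℝ) 1

/-- A monotone partiality strategy. -/
def MonotoneStrat (σ : Hist → ℝ) : Prop :=
  ∀ Z1 Z2, Superior Z1 Z2 → σ Z2 ≤ σ Z1

lemma dig_append (Z1 Z2 : Hist) : dig (Z1 ++ Z2) = dig Z1 ++ dig Z2 := by
  simp [dig]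

lemma con_append (Z1 Z2 : Hist) : con (Z1 ++ Z2) = con Z1 + con Z2 := by
  simp [con, dig_append]

lemma superior_of_dig_eq {Z1 Z2 : Hist} (hl : Z1.length = Z2.length)
    (hd : dig Z1 = dig Z2) : Superior Z1 Z2 := by
  refine ⟨hl, by simp [con, hd], ?_⟩
  rintro i ⟨h1, h2⟩
  rw [← hd, h1] at h2
  exact Ev.noConfusion (Option.some.inj h2)

lemma superior_snoc {Z1 Z2 : Hist} (h : Superior Z1 Z2) (v w : Ev)
    (hvw' : con [v] = con [w]) (hvw : ¬(v = Ev.F ∧ w = Ev.S)) :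
    Superior (Z1 ++ [v]) (Z2 ++ [w]) := by
  obtain ⟨hl, hc, hi⟩ := h
  refine ⟨by simp [hl], by simp [con_append, hc, hvw'], ?_⟩
  rintro i ⟨h1, h2⟩
  rw [dig_append] at h1 h2
  have hn : (dig Z2).length = (dig Z1).length := hc.symm
  rcases lt_trichotomy i (dig Z1).length with hlt | heq | hgt
  · rw [List.getElem?_append_left hlt] at h1
    rw [List.getElem?_append_left (hn ▸ hlt)] at h2
    exact hi i ⟨h1, h2⟩
  · rw [List.getElem?_append_right (le_of_eq heq.symm), heq, Nat.sub_self] at h1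
    rw [List.getElem?_append_right (by omega : (dig Z2).length ≤ i), hn, heq, Nat.sub_self] at h2
    have hv : v = Ev.F := by
      cases v <;> simp_all [dig]
    have hw : w = Ev.S := by
      cases w <;> simp_all [dig]
    exact hvw ⟨hv, hw⟩
  · rw [List.getElem?_append_right (le_of_lt hgt)] at h1
    have hlen1 : (dig [v]).length ≤ 1 := by cases v <;> simp [dig]
    rw [List.getElem?_eq_none (by omega)] at h1
    cases h1

def tailProb (σ : Hist → ℝ) (q : ℝ) (x : ℕ) : ℕ → Hist → ℝ
  | 0, Z => if x ≤ con Z then 1 else 0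
  | t+1, Z =>
      σ Z * (q * tailProb σ q x t (Z ++ [Ev.S]) + (1-q) * tailProb σ q x t (Z ++ [Ev.F]))
      + (1 - σ Z) * tailProb σ q x t (Z ++ [Ev.N])

lemma ev_sum (h : Ev → ℝ) : ∑ v : Ev, h v = h Ev.S + h Ev.N + h Ev.F := by
  have : (Finset.univ : Finset Ev) = {Ev.S, Ev.N, Ev.F} := by decide
  rw [this]
  simp [Finset.sum_insert, Finset.mem_insert]
  ring

lemma sum_eq_tailProb (σ : Hist → ℝ) (q : ℝ) (x : ℕ) :
    ∀ (t : ℕ) (Z : Hist),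
    (∑ f : Fin t → Ev, if x ≤ con (Z ++ List.ofFn f) then
        exAnteFrom σ Z (List.ofFn f) * q ^ Scount (List.ofFn f) * (1-q) ^ Fcount (List.ofFn f)
      else 0)
    = tailProb σ q x t Z := by
  intro t
  induction t with
  | zero => intro Z; simp [tailProb, exAnteFrom, Scount, Fcount]
  | succ t ih =>
    intro Z
    rw [← (Fin.consEquiv (fun _ : Fin (t+1) => Ev)).sum_comp]
    rw [Fintype.sum_prod_type]
    have hv : ∀ (v : Ev),
        (∑ g : Fin t → Ev, if x ≤ con (Z ++ (v :: List.ofFn g)) then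
            exAnteFrom σ Z (v :: List.ofFn g) * q ^ Scount (v :: List.ofFn g)
              * (1-q) ^ Fcount (v :: List.ofFn g) else 0)
        = ((if v = Ev.N then 1 - σ Z else σ Z) *
            (if v = Ev.S then q else if v = Ev.N then 1 else (1-q)))
          * tailProb σ q x t (Z ++ [v]) := by
      intro v
      rw [← ih (Z ++ [v]), Finset.mul_sum]
      refine Finset.sum_congr rfl fun g _ => ?_
      have hc : Z ++ (v :: List.ofFn g) = (Z ++ [v]) ++ List.ofFn g := by
        simp
      rw [hc]
      by_cases hx : x ≤ con ((Z ++ [v]) ++ List.ofFn g)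
      · rw [if_pos hx, if_pos hx]
        cases v <;> simp [exAnteFrom, Scount, Fcount, List.filter_cons, pow_succ] <;> ring
      · rw [if_neg hx, if_neg hx, mul_zero]
    have h2 : ∀ (p : Ev × (Fin t → Ev)), List.ofFn ((Fin.consEquiv (fun _ : Fin (t+1) => Ev)) p)
        = p.1 :: List.ofFn p.2 := by
      rintro ⟨v, g⟩
      simp [Fin.consEquiv, List.ofFn_succ]
    calc (∑ v : Ev, ∑ g : Fin t → Ev,
            if x ≤ con (Z ++ List.ofFn ((Fin.consEquiv (fun _ : Fin (t+1) => Ev)) (v, g))) then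
              exAnteFrom σ Z (List.ofFn ((Fin.consEquiv (fun _ : Fin (t+1) => Ev)) (v, g)))
                * q ^ Scount (List.ofFn ((Fin.consEquiv (fun _ : Fin (t+1) => Ev)) (v, g)))
                * (1-q) ^ Fcount (List.ofFn ((Fin.consEquiv (fun _ : Fin (t+1) => Ev)) (v, g)))
            else 0)
        = ∑ v : Ev, ((if v = Ev.N then 1 - σ Z else σ Z) *
            (if v = Ev.S then q else if v = Ev.N then 1 else (1-q)))
          * tailProb σ q x t (Z ++ [v]) := by
          refine Finset.sum_congr rfl fun v _ => ?_
          rw [← hv v]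
          exact Finset.sum_congr rfl fun g _ => by rw [h2 (v, g)]
      _ = tailProb σ q x (t+1) Z := by
          rw [ev_sum]
          have e1 : ¬(Ev.S = Ev.N) := by decide
          have e2 : ¬(Ev.N = Ev.S) := by decide
          have e3 : ¬(Ev.F = Ev.N) := by decide
          have e4 : ¬(Ev.F = Ev.S) := by decide
          rw [if_neg e1, if_pos rfl, if_neg e2, if_pos rfl, if_neg e3, if_neg e4, if_neg e3]
          simp only [tailProb, if_true]
          ring

lemma superior_refl (Z : Hist) : Superior Z Z := by
  refine ⟨rfl, rfl, ?_⟩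
  rintro i ⟨h1, h2⟩
  rw [h1] at h2
  exact Ev.noConfusion (Option.some.inj h2)

lemma superior_snoc_same {Z1 Z2 : Hist} (h : Superior Z1 Z2) (v : Ev) :
    Superior (Z1 ++ [v]) (Z2 ++ [v]) :=
  superior_snoc h v v rfl (by rintro ⟨rfl, h2⟩; exact Ev.noConfusion h2)

lemma superior_SF (Z : Hist) : Superior (Z ++ [Ev.S]) (Z ++ [Ev.F]) :=
  superior_snoc (superior_refl Z) Ev.S Ev.F (by decide)
    (by rintro ⟨h, -⟩; exact Ev.noConfusion h)

lemma superior_comm (Z : Hist) (v : Ev) :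
    Superior ((Z ++ [v]) ++ [Ev.N]) ((Z ++ [Ev.N]) ++ [v]) :=
  superior_of_dig_eq (by simp) (by cases v <;> simp [dig_append, dig])

lemma SL_CL (σ : Hist → ℝ) (hval : ValidStrat σ) (hmono : MonotoneStrat σ)
    {q : ℝ} (hq0 : 0 ≤ q) (hq1 : q ≤ 1) (x : ℕ) : ∀ t : ℕ,
    (∀ Z1 Z2, Superior Z1 Z2 → tailProb σ q x t Z2 ≤ tailProb σ q x t Z1) ∧
    (∀ Z : Hist, tailProb σ q x t (Z ++ [Ev.N]) ≤
      q * tailProb σ q x t (Z ++ [Ev.S]) + (1-q) * tailProb σ q x t (Z ++ [Ev.F])) := by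
  intro t
  induction t with
  | zero =>
    constructor
    · intro Z1 Z2 h
      simp [tailProb, h.2.1]
    · intro Z
      simp only [tailProb, con_append]
      have hcS : con [Ev.S] = 1 := by decide
      have hcN : con [Ev.N] = 0 := by decide
      have hcF : con [Ev.F] = 1 := by decide
      rw [hcS, hcN, hcF]
      split_ifs <;> first | linarith | omega
  | succ t ih =>
    obtain ⟨ihSL, ihCL⟩ := ih
    constructor
    · intro Z1 Z2 hsup
      have hs : σ Z2 ≤ σ Z1 := hmono _ _ hsup
      obtain ⟨h10, h11⟩ := hval Z1
      obtain ⟨h20, h21⟩ := hval Z2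
      have hS := ihSL _ _ (superior_snoc_same hsup Ev.S)
      have hF := ihSL _ _ (superior_snoc_same hsup Ev.F)
      have hN := ihSL _ _ (superior_snoc_same hsup Ev.N)
      have hAB := ihCL Z1
      simp only [tailProb]
      nlinarith [mul_nonneg h20 (mul_nonneg hq0 (sub_nonneg.2 hS)),
        mul_nonneg h20 (mul_nonneg (by linarith : (0:ℝ) ≤ 1 - q) (sub_nonneg.2 hF)),
        mul_nonneg (by linarith : (0:ℝ) ≤ 1 - σ Z2) (sub_nonneg.2 hN),
        mul_nonneg (sub_nonneg.2 hs) (sub_nonneg.2 hAB)]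
    · intro Z
      obtain ⟨hN0, hN1⟩ := hval (Z ++ [Ev.N])
      obtain ⟨hS0, hS1⟩ := hval (Z ++ [Ev.S])
      obtain ⟨hF0, hF1⟩ := hval (Z ++ [Ev.F])
      have s1 := ihSL _ _ (superior_comm Z Ev.S)
      have s2 := ihSL _ _ (superior_comm Z Ev.F)
      have c3 := ihCL (Z ++ [Ev.N])
      have c4 := ihCL (Z ++ [Ev.S])
      have c5 := ihCL (Z ++ [Ev.F])
      simp only [tailProb]
      nlinarith [mul_nonneg (by linarith : (0:ℝ) ≤ 1 - σ (Z ++ [Ev.N])) (sub_nonneg.2 c3),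
        mul_nonneg hq0 (sub_nonneg.2 s1),
        mul_nonneg (by linarith : (0:ℝ) ≤ 1 - q) (sub_nonneg.2 s2),
        mul_nonneg (mul_nonneg hq0 hS0) (sub_nonneg.2 c4),
        mul_nonneg (mul_nonneg (by linarith : (0:ℝ) ≤ 1 - q) hF0) (sub_nonneg.2 c5)]

lemma tailProb_mono_q (σ : Hist → ℝ) (hval : ValidStrat σ) (hmono : MonotoneStrat σ)
    (x : ℕ) {q1 q2 : ℝ} (h10 : 0 ≤ q1) (h21 : q2 ≤ 1) (h12 : q1 ≤ q2) :
    ∀ t Z, tailProb σ q1 x t Z ≤ tailProb σ q2 x t Z := by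
  have h11 : q1 ≤ 1 := le_trans h12 h21
  have h20 : 0 ≤ q2 := le_trans h10 h12
  intro t
  induction t with
  | zero => intro Z; simp [tailProb]
  | succ t ih =>
    intro Z
    obtain ⟨hσ0, hσ1⟩ := hval Z
    have iS := ih (Z ++ [Ev.S])
    have iF := ih (Z ++ [Ev.F])
    have iN := ih (Z ++ [Ev.N])
    have hSF : tailProb σ q2 x t (Z ++ [Ev.F]) ≤ tailProb σ q2 x t (Z ++ [Ev.S]) :=
      (SL_CL σ hval hmono h20 h21 x t).1 _ _ (superior_SF Z)
    simp only [tailProb]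
    nlinarith [mul_nonneg hσ0 (mul_nonneg h10 (sub_nonneg.2 iS)),
      mul_nonneg hσ0 (mul_nonneg (by linarith : (0:ℝ) ≤ 1 - q1) (sub_nonneg.2 iF)),
      mul_nonneg (by linarith : (0:ℝ) ≤ 1 - σ Z) (sub_nonneg.2 iN),
      mul_nonneg hσ0 (mul_nonneg (sub_nonneg.2 h12) (sub_nonneg.2 hSF))]

/-- for a monotone partiality strategy, the probability that a
`t`-deep history has consumption at least `x` is non-decreasing in the quality
`q ∈ [0,1]`. -/
theorem consumption_tail_monotone (σ : Hist → ℝ) (hval : ValidStrat σ)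
    (hmono : MonotoneStrat σ) (t x : ℕ) :
    MonotoneOn
      (fun q : ℝ => ∑ f : Fin t → Ev,
        if x ≤ con (List.ofFn f) then histProb σ q (List.ofFn f) else 0)
      (Set.Icc (0 : ℝ) 1) := by
  intro q1 hq1 q2 hq2 h12
  have e : ∀ q : ℝ,
      (∑ f : Fin t → Ev,
        if x ≤ con (List.ofFn f) then histProb σ q (List.ofFn f) else 0)
      = tailProb σ q x t [] := by
    intro q
    rw [← sum_eq_tailProb σ q x t []]
    refine Finset.sum_congr rfl fun f _ => ?_
    simp [histProb, exAnte]
  simp only []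
  rw [e q1, e q2]
  exact tailProb_mono_q σ hval hmono x hq1.1 hq2.2 h12 t []
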